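/- For a nonassociative algebra A over ℂ, the set TDer(A) of tailed derivations of A is a Lie subalgebra of 𝔤𝔩(A); in particular, if D and T are tailed derivations with tails d and t respectively, then [D,T] = DT − TD is a tailed derivation with tail d∘T − t∘D. -/
import Mathlib


/-- A tailed derivation of a nonassociative algebra (given by its bilinear
multiplication `mul`): a linear map `D` with tail `d` (a linear function) such that
`D([y,z]) = [D y, z] + [y, D z] + d z • y − d y • z`. -/
def IsTailedDer {A : Type} [AddCommGroup A] [Module ℂ A]
    (mul : A →ₗ[ℂ] A →ₗ[ℂ] A) (D : A →ₗ[ℂ] A) (d : A →ₗ[ℂ] ℂ) : Prop :=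
  ∀ y z : A, D (mul y z) = mul (D y) z + mul y (D z) + d z • y - d y • z

/-- the tailed derivations of a nonassociative algebra `A` form a Lie
subalgebra of `𝔤𝔩(A)`: they are closed under addition, scalar multiplication, and the
commutator bracket; moreover `[D,T] = DT − TD` has tail `d∘T − t∘D`. -/
theorem tailedDer_lie_subalgebra
    {A : Type} [AddCommGroup A] [Module ℂ A] (mul : A →ₗ[ℂ] A →ₗ[ℂ] A)
    (D T : A →ₗ[ℂ] A) (d t : A →ₗ[ℂ] ℂ)
    (hD : IsTailedDer mul D d) (hT : IsTailedDer mul T t) :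
    IsTailedDer mul 0 0 ∧
    IsTailedDer mul (D + T) (d + t) ∧
    (∀ a : ℂ, IsTailedDer mul (a • D) (a • d)) ∧
    IsTailedDer mul (D ∘ₗ T - T ∘ₗ D) (d ∘ₗ T - t ∘ₗ D) := by
  refine ⟨?_, ?_, ?_, ?_⟩
  · intro y z; simp
  · intro y z
    simp only [LinearMap.add_apply, map_add, hD y z, hT y z, add_smul]
    abel
  · intro a y z
    simp only [LinearMap.smul_apply, hD y z, smul_add, smul_sub, smul_smul,
      map_add, map_sub, map_smul, smul_eq_mul]
  · intro y z
    simp only [LinearMap.sub_apply, LinearMap.comp_apply]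
    rw [hT y z, hD y z]
    simp only [map_add, map_sub, map_smul, hD (T y) z, hD y (T z),
      hT (D y) z, hT y (D z), smul_eq_mul, map_sub, LinearMap.sub_apply, sub_smul]
    abel
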